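/- arXiv:2010.05370 — 9 statements merged into one kernel-verified Lean document; each statement's English description precedes it below -/
import Mathlib

section
/- Let p_v > 0, p_c > 0, d > 0, R ≥ 0 be real numbers and suppose 0 < g2(R/d) < 1. Then for every x₂ ∈ [0,1]: u1(0, x₂) − u1(1, x₂) < 0 if g2(R/d) < x₂ ≤ 1; u1(0, x₂) − u1(1, x₂) = 0 if x₂ = g2(R/d); and u1(0, x₂) − u1(1, x₂) > 0 if 0 ≤ x₂ < g2(R/d). Consequently miner 1's best response against x₂ is x₁ = 1 when x₂ > g2(R/d), any x₁ ∈ [0,1] when x₂ = g2(R/d), and x₁ = 0 when x₂ < g2(R/d). -/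
/-- Expected payoff of miner 1; `x1`, `x2` are the probabilities that
miners 1 and 2 do NOT participate in mining. -/
noncomputable def u1 (pv pc d R x1 x2 : ℝ) : ℝ :=
  (1 - x1) * (x2 * (R - d) +
    (1 - x2) * (1 / (1 + pv * pc)) * (R - d / (1 + pv * pc)))

/-- The threshold function `g2`. -/
noncomputable def g2 (pv pc z : ℝ) : ℝ :=
  (z - 1 / (1 + pv * pc)) / (pv * pc * ((2 + pv * pc) / (1 + pv * pc) - z))

/-- Miner 1's best-response set against the mixed strategy `x2` of miner 2. -/
noncomputable def bestResponse1 (pv pc d R x2 : ℝ) : Set ℝ :=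
  {y ∈ Set.Icc (0 : ℝ) 1 |
    ∀ y' ∈ Set.Icc (0 : ℝ) 1, u1 pv pc d R y x2 ≥ u1 pv pc d R y' x2}

lemma u1_factor (pv pc d R x1 x2 : ℝ) :
    u1 pv pc d R x1 x2 = (1 - x1) * u1 pv pc d R 0 x2 := by
  unfold u1; ring

lemma br_neg (pv pc d R x2 : ℝ) (h : u1 pv pc d R 0 x2 < 0) :
    bestResponse1 pv pc d R x2 = {1} := by
  ext y
  simp only [bestResponse1, Set.mem_setOf_eq, Set.mem_singleton_iff, Set.mem_Icc]
  constructor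
  · rintro ⟨hy, hbest⟩
    have h1 := hbest 1 ⟨zero_le_one, le_refl 1⟩
    rw [u1_factor pv pc d R y, u1_factor pv pc d R 1] at h1
    nlinarith [hy.1, hy.2]
  · rintro rfl
    refine ⟨⟨zero_le_one, le_refl 1⟩, ?_⟩
    intro y' hy'
    rw [u1_factor pv pc d R 1, u1_factor pv pc d R y']
    nlinarith [hy'.1, hy'.2]

lemma br_pos (pv pc d R x2 : ℝ) (h : 0 < u1 pv pc d R 0 x2) :
    bestResponse1 pv pc d R x2 = {0} := by
  ext y
  simp only [bestResponse1, Set.mem_setOf_eq, Set.mem_singleton_iff, Set.mem_Icc]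
  constructor
  · rintro ⟨hy, hbest⟩
    have h1 := hbest 0 ⟨le_refl 0, zero_le_one⟩
    rw [u1_factor pv pc d R y] at h1
    nlinarith [hy.1, hy.2]
  · rintro rfl
    refine ⟨⟨le_refl 0, zero_le_one⟩, ?_⟩
    intro y' hy'
    rw [u1_factor pv pc d R y']
    nlinarith [hy'.1, hy'.2]

lemma br_zero (pv pc d R x2 : ℝ) (h : u1 pv pc d R 0 x2 = 0) :
    bestResponse1 pv pc d R x2 = Set.Icc 0 1 := by
  ext y
  simp only [bestResponse1, Set.mem_setOf_eq, Set.mem_Icc]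
  constructor
  · rintro ⟨hy, _⟩; exact hy
  · intro hy
    refine ⟨hy, ?_⟩
    intro y' hy'
    rw [u1_factor pv pc d R y, u1_factor pv pc d R y', h]
    simp

/-- Sign of miner 1's payoff difference and the resulting best response,
when `0 < g2(R/d) < 1`. -/
theorem miner1_best_response
    (pv pc d R : ℝ) (hpv : 0 < pv) (hpc : 0 < pc) (hd : 0 < d) (hR : 0 ≤ R)
    (hg : 0 < g2 pv pc (R / d)) (hg' : g2 pv pc (R / d) < 1) :
    ∀ x2 ∈ Set.Icc (0 : ℝ) 1,
      ((g2 pv pc (R / d) < x2 → u1 pv pc d R 0 x2 - u1 pv pc d R 1 x2 < 0) ∧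
       (x2 = g2 pv pc (R / d) → u1 pv pc d R 0 x2 - u1 pv pc d R 1 x2 = 0) ∧
       (x2 < g2 pv pc (R / d) → 0 < u1 pv pc d R 0 x2 - u1 pv pc d R 1 x2)) ∧
      ((g2 pv pc (R / d) < x2 → bestResponse1 pv pc d R x2 = {1}) ∧
       (x2 = g2 pv pc (R / d) → bestResponse1 pv pc d R x2 = Set.Icc 0 1) ∧
       (x2 < g2 pv pc (R / d) → bestResponse1 pv pc d R x2 = {0})) := by
  intro x2 hx2
  have hs0 : (0 : ℝ) < 1 + pv * pc := by nlinarith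
  have hs0' : (1 + pv * pc : ℝ) ≠ 0 := ne_of_gt hs0
  set N : ℝ := R / d - 1 / (1 + pv * pc) with hN_def
  set Dq : ℝ := pv * pc * ((2 + pv * pc) / (1 + pv * pc) - R / d) with hD_def
  have hg2 : g2 pv pc (R / d) = N / Dq := rfl
  have hE : (2 + pv * pc) / (1 + pv * pc) = 1 / (1 + pv * pc) + 1 := by
    field_simp
    ring
  have hD : 0 < Dq := by
    rcases lt_trichotomy Dq 0 with h | h | h
    · exfalso
      have hpp : 0 < pv * pc := mul_pos hpv hpc
      have hEz : (2 + pv * pc) / (1 + pv * pc) - R / d < 0 := by nlinarith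
      have hNpos : 0 < N := by
        rw [hN_def]
        rw [hE] at hEz
        linarith
      have : N / Dq < 0 := div_neg_of_pos_of_neg hNpos h
      rw [hg2] at hg; linarith
    · exfalso
      rw [hg2, h, div_zero] at hg; exact lt_irrefl 0 hg
    · exact h
  have hN : 0 < N := by
    rw [hg2] at hg
    have := mul_pos hg hD
    rwa [div_mul_cancel₀ _ (ne_of_gt hD)] at this
  have hNDq : N < Dq := by
    rw [hg2, div_lt_one hD] at hg'
    exact hg'
  have hu1_1 : u1 pv pc d R 1 x2 = 0 := by unfold u1; ring
  have hkey : u1 pv pc d R 0 x2 = d / (1 + pv * pc) * (N - x2 * Dq) := by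
    rw [hN_def, hD_def]
    unfold u1
    field_simp
    ring
  have hds : 0 < d / (1 + pv * pc) := div_pos hd hs0
  constructor
  · refine ⟨?_, ?_, ?_⟩
    · intro hlt
      rw [hu1_1, hkey, sub_zero]
      have : N < x2 * Dq := by
        rw [hg2, div_lt_iff₀ hD] at hlt
        linarith
      exact mul_neg_of_pos_of_neg hds (by linarith)
    · intro heq
      rw [hu1_1, hkey, sub_zero]
      have : x2 * Dq = N := by
        rw [heq, hg2, div_mul_cancel₀ _ (ne_of_gt hD)]
      rw [this]; ring
    · intro hlt
      rw [hu1_1, hkey, sub_zero]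
      have : x2 * Dq < N := by
        rw [hg2, lt_div_iff₀ hD] at hlt
        linarith
      exact mul_pos hds (by linarith)
  · refine ⟨?_, ?_, ?_⟩
    · intro hlt
      apply br_neg
      rw [hkey]
      have : N < x2 * Dq := by
        rw [hg2, div_lt_iff₀ hD] at hlt
        linarith
      exact mul_neg_of_pos_of_neg hds (by linarith)
    · intro heq
      apply br_zero
      rw [hkey]
      have : x2 * Dq = N := by
        rw [heq, hg2, div_mul_cancel₀ _ (ne_of_gt hD)]
      rw [this]; ring
    · intro hlt
      apply br_pos
      rw [hkey]
      have : x2 * Dq < N := by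
        rw [hg2, lt_div_iff₀ hD] at hlt
        linarith
      exact mul_pos hds (by linarith)
end

section
/- Let p_v ≥ 1, p_c ≥ 1, d > 0, R ≥ 0 be real numbers with R/d < p_c/(1+p_v·p_c). Then the set of Nash equilibria of the two-miner mining game is exactly {(1,1)}, i.e., the unique equilibrium is that both miners do not participate in mining with probability 1. -/
/-- Expected payoff of miner 2. -/
noncomputable def u2 (pv pc d R x1 x2 : ℝ) : ℝ :=
  (1 - x2) * (x1 * (R - d / pv) +
    (1 - x1) * (pv * pc / (1 + pv * pc)) * (R - d * pc / (1 + pv * pc)))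

/-- `p = (x1, x2) ∈ [0,1]²` is a (mixed) Nash equilibrium of the
two-miner mining game. -/
def IsNashEq (pv pc d R : ℝ) (p : ℝ × ℝ) : Prop :=
  p.1 ∈ Set.Icc (0 : ℝ) 1 ∧ p.2 ∈ Set.Icc (0 : ℝ) 1 ∧
  (∀ y ∈ Set.Icc (0 : ℝ) 1, u1 pv pc d R p.1 p.2 ≥ u1 pv pc d R y p.2) ∧
  (∀ y ∈ Set.Icc (0 : ℝ) 1, u2 pv pc d R p.1 p.2 ≥ u2 pv pc d R p.1 y)

/-- If `R/d < pc/(1 + pv pc)` (with `pv ≥ 1`, `pc ≥ 1`), the unique Nash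
equilibrium is that both miners do not participate. -/
theorem nash_eq_case_low_reward
    (pv pc d R : ℝ) (hpv : 1 ≤ pv) (hpc : 1 ≤ pc) (hd : 0 < d) (hR : 0 ≤ R)
    (h : R / d < pc / (1 + pv * pc)) :
    {p : ℝ × ℝ | IsNashEq pv pc d R p} = {(1, 1)} := by
  have hpv0 : (0:ℝ) < pv := by linarith
  have hpc0 : (0:ℝ) < pc := by linarith
  have hpos : (0:ℝ) < 1 + pv * pc := by nlinarith
  -- key: R * (1 + pv*pc) < d * pc
  have hkey : R * (1 + pv * pc) < d * pc := by
    have := (div_lt_div_iff₀ hd hpos).mp h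
    linarith
  have hRd : R - d < 0 := by
    nlinarith [mul_nonneg hd.le (show (0:ℝ) ≤ pv * pc - pc by nlinarith),
      mul_nonneg hR (show (0:ℝ) ≤ pv * pc by positivity)]
  have hRdpv : R - d / pv < 0 := by
    rw [sub_neg, lt_div_iff₀ hpv0]
    nlinarith
  have hRdpc : R - d * pc / (1 + pv * pc) < 0 := by
    rw [sub_neg, lt_div_iff₀ hpos]
    nlinarith
  have hq : (0:ℝ) < pv * pc / (1 + pv * pc) := by positivity
  ext ⟨x1, x2⟩
  simp only [Set.mem_setOf_eq, Set.mem_singleton_iff, Prod.mk.injEq]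
  constructor
  · rintro ⟨⟨hx10, hx11⟩, ⟨hx20, hx21⟩, h1, h2⟩
    -- miner 2's factor is strictly negative
    have hB : x1 * (R - d / pv) +
        (1 - x1) * (pv * pc / (1 + pv * pc)) * (R - d * pc / (1 + pv * pc)) < 0 := by
      have hqc : (pv * pc / (1 + pv * pc)) * (R - d * pc / (1 + pv * pc)) < 0 :=
        mul_neg_of_pos_of_neg hq hRdpc
      set a := R - d / pv
      set c := (pv * pc / (1 + pv * pc)) * (R - d * pc / (1 + pv * pc))
      have h1' : x1 * a ≤ x1 * max a c :=
        mul_le_mul_of_nonneg_left (le_max_left _ _) hx10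
      have h2' : (1 - x1) * (pv * pc / (1 + pv * pc)) * (R - d * pc / (1 + pv * pc))
          = (1 - x1) * c := by ring
      have h3' : (1 - x1) * c ≤ (1 - x1) * max a c :=
        mul_le_mul_of_nonneg_left (le_max_right _ _) (by linarith)
      have hm : max a c < 0 := max_lt hRdpv hqc
      calc x1 * a + (1 - x1) * (pv * pc / (1 + pv * pc)) * (R - d * pc / (1 + pv * pc))
          ≤ x1 * max a c + (1 - x1) * max a c := by rw [h2']; exact add_le_add h1' h3'
        _ = max a c := by ring
        _ < 0 := hm
    have hu2 : u2 pv pc d R x1 x2 ≥ u2 pv pc d R x1 1 := h2 1 (by norm_num)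
    have hu21 : u2 pv pc d R x1 1 = 0 := by simp [u2]
    rw [hu21] at hu2
    have hx2 : x2 = 1 := by
      by_contra hne
      have hx2lt : x2 < 1 := lt_of_le_of_ne hx21 hne
      have : u2 pv pc d R x1 x2 < 0 := by
        unfold u2
        exact mul_neg_of_pos_of_neg (by linarith) hB
      linarith
    subst hx2
    have hu1 : u1 pv pc d R x1 1 ≥ u1 pv pc d R 1 1 := h1 1 (by norm_num)
    have hu11 : u1 pv pc d R 1 1 = 0 := by simp [u1]
    rw [hu11] at hu1
    have hu1x : u1 pv pc d R x1 1 = (1 - x1) * (R - d) := by unfold u1; ring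
    rw [hu1x] at hu1
    have hx1 : x1 = 1 := by nlinarith
    exact ⟨hx1, rfl⟩
  · rintro ⟨hx1, hx2⟩
    subst hx1; subst hx2
    refine ⟨by norm_num, by norm_num, ?_, ?_⟩
    · intro y hy
      have : u1 pv pc d R y 1 = (1 - y) * (R - d) := by unfold u1; ring
      rw [this]
      have : u1 pv pc d R 1 1 = 0 := by simp [u1]
      rw [this]
      have : (1 - y) * (R - d) ≤ 0 :=
        mul_nonpos_of_nonneg_of_nonpos (by linarith [hy.2]) (le_of_lt hRd)
      linarith
    · intro y hy
      have h1 : u2 pv pc d R 1 y = (1 - y) * (R - d / pv) := by unfold u2; ring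
      rw [h1]
      have h2 : u2 pv pc d R 1 1 = 0 := by simp [u2]
      rw [h2]
      have : (1 - y) * (R - d / pv) ≤ 0 :=
        mul_nonpos_of_nonneg_of_nonpos (by linarith [hy.2]) (le_of_lt hRdpv)
      linarith
end

section
/- Let p_v ≥ 1, p_c ≥ 1, d > 0, R ≥ 0 be real numbers with R/d = p_c/(1+p_v·p_c). Then the set of Nash equilibria of the two-miner mining game is exactly {(1,1)} ∪ { (0, γ) : 0 ≤ γ ≤ g2(p_c/(1+p_v·p_c)) }, i.e., either both miners do not participate with probability 1, or miner 1 participates with probability 1 and miner 2 does not participate with any probability γ ∈ [0, g2(p_c/(1+p_v·p_c))]. -/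
/-!
Writing `S = 1 + pv * pc`, the condition on `R / d` makes both payoffs factor:
`u1 = (1 - x1) * d / S² * ((pc - 1) - x2 * pv pc (2 + pv pc - pc))` and
`u2 = -(1 - x2) * x1 * d / (S pv)`. Each miner's payoff is thus affine in its own strategy, so
best replies are read off the sign of the slope. Miner 2 is indifferent only when `x1 = 0` and
otherwise stays out (`x2 = 1`); against `x2 = 1` miner 1's slope is negative, forcing `x1 = 1`,
while against `x1 = 0` miner 1 may mine exactly when `x2 ≤ g2 (pc / S)`.
-/

open Set

theorem forall_mem_Icc_one_sub_mul_le_iff {x c : ℝ} (hx : x ∈ Icc (0 : ℝ) 1) :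
    (∀ y ∈ Icc (0 : ℝ) 1, (1 - x) * c ≥ (1 - y) * c) ↔ (0 < x → c ≤ 0) ∧ (x < 1 → 0 ≤ c) := by
  constructor
  · intro h
    have at_zero := h 0 ⟨le_rfl, zero_le_one⟩
    have at_one := h 1 ⟨zero_le_one, le_rfl⟩
    constructor
    · intro hx0; nlinarith
    · intro hx1; nlinarith
  · rintro ⟨hpos, hlt⟩ y hy
    rcases hx.1.eq_or_lt with rfl | hx0
    · nlinarith [hlt zero_lt_one, hy.1]
    rcases hx.2.eq_or_lt with rfl | hx1
    · nlinarith [hpos hx0, hy.2]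
    simp [le_antisymm (hpos hx0) (hlt hx1)]

theorem equilibrium_conditions_iff {a b x1 x2 : ℝ} (hb : 0 < b) (hab : a < b) :
    (x1 ∈ Icc (0 : ℝ) 1 ∧ x2 ∈ Icc (0 : ℝ) 1 ∧ (0 < x1 → a ≤ x2 * b) ∧ (x1 < 1 → x2 * b ≤ a) ∧
        (x2 < 1 → x1 = 0)) ↔
      (x1 = 1 ∧ x2 = 1) ∨ (x1 = 0 ∧ x2 ∈ Icc 0 (a / b)) := by
  simp only [mem_Icc, le_div_iff₀ hb]
  constructor
  · rintro ⟨⟨hx1, hx1'⟩, ⟨hx2, hx2'⟩, hpos, hlt, hmin⟩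
    rcases hx1.eq_or_lt with rfl | hx1pos
    · exact Or.inr ⟨rfl, hx2, hlt zero_lt_one⟩
    have x2_eq : x2 = 1 := by
      by_contra hne
      exact hx1pos.ne' (hmin (lt_of_le_of_ne hx2' hne))
    subst x2_eq
    have x1_eq : x1 = 1 := by
      by_contra hne
      linarith [hlt (lt_of_le_of_ne hx1' hne)]
    exact Or.inl ⟨x1_eq, rfl⟩
  · rintro (⟨rfl, rfl⟩ | ⟨rfl, hx2, hx2a⟩)
    · refine ⟨⟨zero_le_one, le_rfl⟩, ⟨zero_le_one, le_rfl⟩, fun _ => by linarith, ?_, ?_⟩ <;> simp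
    · have hx2' : x2 ≤ 1 := by nlinarith
      exact ⟨⟨le_rfl, zero_le_one⟩, ⟨hx2, hx2'⟩, fun h => absurd h (lt_irrefl 0),
        fun _ => hx2a, fun _ => rfl⟩

section BoundaryRatio

variable {pv pc : ℝ}

theorem u1_boundary_ratio (d : ℝ) (hS : 1 + pv * pc ≠ 0) (x1 x2 : ℝ) :
    u1 pv pc d (d * pc / (1 + pv * pc)) x1 x2 =
      (1 - x1) * (d / (1 + pv * pc) ^ 2 * (pc - 1 - x2 * (pv * pc * (2 + pv * pc - pc)))) := by
  have hS' : 1 + pc * pv ≠ 0 := by rwa [mul_comm]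
  unfold u1
  field_simp
  ring

theorem u2_boundary_ratio (d : ℝ) (hpv : pv ≠ 0) (hS : 1 + pv * pc ≠ 0) (x1 x2 : ℝ) :
    u2 pv pc d (d * pc / (1 + pv * pc)) x1 x2 =
      (1 - x2) * -(x1 * (d / ((1 + pv * pc) * pv))) := by
  have hS' : 1 + pc * pv ≠ 0 := by rwa [mul_comm]
  unfold u2
  field_simp
  ring

theorem g2_boundary_ratio (hS : 0 < 1 + pv * pc) (hgap : 0 < pv * pc * (2 + pv * pc - pc)) :
    g2 pv pc (pc / (1 + pv * pc)) = (pc - 1) / (pv * pc * (2 + pv * pc - pc)) := by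
  have hpvpc : pv * pc ≠ 0 := by rintro h; simp [h] at hgap
  have h2 : 2 + pv * pc - pc ≠ 0 := by rintro h; simp [h] at hgap
  unfold g2
  rw [div_eq_div_iff _ hgap.ne']
  · field_simp
  · rw [show (2 + pv * pc) / (1 + pv * pc) - pc / (1 + pv * pc)
        = (2 + pv * pc - pc) / (1 + pv * pc) by ring]
    exact mul_ne_zero hpvpc (div_ne_zero h2 hS.ne')

theorem isNashEq_boundary_ratio_iff {d x1 x2 : ℝ} (hpv : 0 < pv) (hpc : 0 < pc) (hd : 0 < d) :
    IsNashEq pv pc d (d * pc / (1 + pv * pc)) (x1, x2) ↔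
      x1 ∈ Icc (0 : ℝ) 1 ∧ x2 ∈ Icc (0 : ℝ) 1 ∧
        (0 < x1 → pc - 1 ≤ x2 * (pv * pc * (2 + pv * pc - pc))) ∧
        (x1 < 1 → x2 * (pv * pc * (2 + pv * pc - pc)) ≤ pc - 1) ∧
        (x2 < 1 → x1 = 0) := by
  have hS : 0 < 1 + pv * pc := by positivity
  have hc1 : 0 < d / (1 + pv * pc) ^ 2 := by positivity
  have hc2 : 0 < d / ((1 + pv * pc) * pv) := by positivity
  simp only [IsNashEq, u1_boundary_ratio d hS.ne', u2_boundary_ratio d hpv.ne' hS.ne']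
  refine and_congr_right fun hx1 => and_congr_right fun hx2 => ?_
  rw [forall_mem_Icc_one_sub_mul_le_iff hx1, forall_mem_Icc_one_sub_mul_le_iff hx2]
  have miner2 : (0 < x2 → -(x1 * (d / ((1 + pv * pc) * pv))) ≤ 0) ∧
      (x2 < 1 → 0 ≤ -(x1 * (d / ((1 + pv * pc) * pv)))) ↔ (x2 < 1 → x1 = 0) := by
    refine ⟨fun h hlt => ?_, fun h => ⟨fun _ => ?_, fun hlt => ?_⟩⟩
    · nlinarith [h.2 hlt, hx1.1]
    · nlinarith [hx1.1]
    · simp [h hlt]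
  rw [miner2, ← neg_nonneg, ← mul_neg, mul_nonneg_iff_of_pos_left hc1,
    mul_nonneg_iff_of_pos_left hc1, neg_nonneg, sub_nonpos, sub_nonneg, and_assoc]

end BoundaryRatio

theorem nash_eq_case_boundary_low_general
    (pv pc d R : ℝ) (hpv : 1 ≤ pv) (hpc : 1 ≤ pc) (hd : 0 < d)
    (h : R / d = pc / (1 + pv * pc)) :
    {p : ℝ × ℝ | IsNashEq pv pc d R p}
      = {((1 : ℝ), (1 : ℝ))} ∪
        {p : ℝ × ℝ | p.1 = 0 ∧ p.2 ∈ Set.Icc 0 (g2 pv pc (pc / (1 + pv * pc)))} := by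
  have hpv0 : 0 < pv := by linarith
  have hpc0 : 0 < pc := by linarith
  have hS : 0 < 1 + pv * pc := by positivity
  have gap_ge : 2 * pc ≤ pv * pc * (2 + pv * pc - pc) := by
    nlinarith [mul_nonneg hpc0.le (sub_nonneg.2 hpv),
      mul_nonneg (mul_nonneg hpc0.le hpc0.le) (sub_nonneg.2 hpv)]
  obtain rfl : R = d * pc / (1 + pv * pc) := by
    rw [div_eq_div_iff hd.ne' hS.ne'] at h
    rw [eq_div_iff hS.ne']
    linarith
  ext ⟨x1, x2⟩
  rw [mem_ofPred_eq, isNashEq_boundary_ratio_iff hpv0 hpc0 hd,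
    equilibrium_conditions_iff (by linarith) (by linarith), g2_boundary_ratio hS (by linarith)]
  simp

/-- If `R/d = pc/(1 + pv pc)` (with `pv ≥ 1`, `pc ≥ 1`), the Nash equilibria
are `(1,1)` together with all `(0, γ)` for `γ ∈ [0, g2(pc/(1 + pv pc))]`. -/
theorem nash_eq_case_boundary_low
    (pv pc d R : ℝ) (hpv : 1 ≤ pv) (hpc : 1 ≤ pc) (hd : 0 < d) (hR : 0 ≤ R)
    (h : R / d = pc / (1 + pv * pc)) :
    {p : ℝ × ℝ | IsNashEq pv pc d R p}
      = {((1 : ℝ), (1 : ℝ))} ∪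
        {p : ℝ × ℝ | p.1 = 0 ∧ p.2 ∈ Set.Icc 0 (g2 pv pc (pc / (1 + pv * pc)))} :=
  nash_eq_case_boundary_low_general pv pc d R hpv hpc hd h
end

section
/- Let p_v ≥ 1, p_c ≥ 1, d > 0, R ≥ 0 be real numbers with R/d = 1/p_v. Then the set of Nash equilibria of the two-miner mining game is exactly {(0,0)} ∪ { (1, δ) : g2(1/p_v) ≤ δ ≤ 1 }, i.e., either both miners participate with probability 1, or miner 1 does not participate with probability 1 and miner 2 does not participate with any probability δ ∈ [g2(1/p_v), 1]. -/
namespace NashAux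

lemma g2_val (pv pc : ℝ) (hpv : 1 ≤ pv) (hpc : 1 ≤ pc) :
    g2 pv pc (1 / pv)
      = (1 + pv * pc - pv) / (pv * pc * (pv * (2 + pv * pc) - (1 + pv * pc))) := by
  have hpv0 : (0:ℝ) < pv := by linarith
  have hA : (0:ℝ) < 1 + pv * pc := by nlinarith
  have hD1 : (1:ℝ) / pv < (2 + pv * pc) / (1 + pv * pc) := by
    rw [div_lt_div_iff₀ hpv0 hA]; nlinarith
  unfold g2
  rw [div_eq_div_iff]
  · field_simp
  · exact ne_of_gt (mul_pos (mul_pos hpv0 (by linarith)) (by linarith))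
  · have hpc0 : (0:ℝ) < pc := by linarith
    have hin : (0:ℝ) < pv * (2 + pv * pc) - (1 + pv * pc) := by
      nlinarith [mul_nonneg (mul_nonneg hpv0.le hpc0.le) (sub_nonneg.2 hpv)]
    exact ne_of_gt (mul_pos (mul_pos hpv0 hpc0) hin)

/-- The key characterization: miner 1's participation payoff against `t`
is nonpositive iff `t ≥ g2 (1/pv)`. -/
lemma f1_nonpos_iff (pv pc d : ℝ) (hpv : 1 ≤ pv) (hpc : 1 ≤ pc) (hd : 0 < d)
    (t : ℝ) :
    t * (d / pv - d) + (1 - t) * (1 / (1 + pv * pc)) * (d / pv - d / (1 + pv * pc)) ≤ 0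
      ↔ g2 pv pc (1 / pv) ≤ t := by
  have hpv0 : (0:ℝ) < pv := by linarith
  have hA : (0:ℝ) < 1 + pv * pc := by nlinarith
  have hpc0 : (0:ℝ) < pc := by linarith
  have hK : (0:ℝ) < pv * pc * (pv * (2 + pv * pc) - (1 + pv * pc)) := by
    have hin : (0:ℝ) < pv * (2 + pv * pc) - (1 + pv * pc) := by
      nlinarith [mul_nonneg (mul_nonneg hpv0.le hpc0.le) (sub_nonneg.2 hpv)]
    exact mul_pos (mul_pos hpv0 hpc0) hin
  rw [g2_val pv pc hpv hpc, div_le_iff₀ hK]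
  have hfact :
      t * (d / pv - d) + (1 - t) * (1 / (1 + pv * pc)) * (d / pv - d / (1 + pv * pc))
        = (d / (pv * (1 + pv * pc) ^ 2)) *
            ((1 + pv * pc - pv) - t * (pv * pc * (pv * (2 + pv * pc) - (1 + pv * pc)))) := by
    field_simp
    ring
  rw [hfact]
  have hc : (0:ℝ) < d / (pv * (1 + pv * pc) ^ 2) := by positivity
  constructor
  · intro hh; nlinarith
  · intro hh
    apply mul_nonpos_of_nonneg_of_nonpos hc.le
    linarith

end NashAux

/-- If `R/d = 1/pv` (with `pv ≥ 1`, `pc ≥ 1`), the Nash equilibria are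
`(0,0)` together with all `(1, δ)` for `δ ∈ [g2(1/pv), 1]`. -/
theorem nash_eq_case_boundary_high
    (pv pc d R : ℝ) (hpv : 1 ≤ pv) (hpc : 1 ≤ pc) (hd : 0 < d) (hR : 0 ≤ R)
    (h : R / d = 1 / pv) :
    {p : ℝ × ℝ | IsNashEq pv pc d R p}
      = {((0 : ℝ), (0 : ℝ))} ∪
        {p : ℝ × ℝ | p.1 = 1 ∧ p.2 ∈ Set.Icc (g2 pv pc (1 / pv)) 1} := by
  have hpv0 : (0:ℝ) < pv := by linarith
  have hpc0 : (0:ℝ) < pc := by linarith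
  have hA : (0:ℝ) < 1 + pv * pc := by nlinarith
  have hR' : R = d / pv := by
    have := h
    field_simp at this
    rw [eq_div_iff (ne_of_gt hpv0)]
    linarith
  subst hR'
  -- positive constants
  have hc1 : (0:ℝ) < (1 / (1 + pv * pc)) * (d / pv - d / (1 + pv * pc)) := by
    have h1 : d / (1 + pv * pc) < d / pv :=
      div_lt_div_of_pos_left hd hpv0 (by nlinarith)
    have : (0:ℝ) < 1 / (1 + pv * pc) := by positivity
    exact mul_pos this (by linarith)
  have hc2 : (0:ℝ) < (pv * pc / (1 + pv * pc)) * (d / pv - d * pc / (1 + pv * pc)) := by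
    have h1 : d * pc / (1 + pv * pc) < d / pv := by
      rw [div_lt_div_iff₀ hA hpv0]; nlinarith
    have : (0:ℝ) < pv * pc / (1 + pv * pc) := by positivity
    exact mul_pos this (by linarith)
  have hzero : d / pv - d / pv = 0 := by ring
  have hg2pos : 0 < g2 pv pc (1 / pv) := by
    rw [NashAux.g2_val pv pc hpv hpc]
    have hK : (0:ℝ) < pv * pc * (pv * (2 + pv * pc) - (1 + pv * pc)) := by
      have hin : (0:ℝ) < pv * (2 + pv * pc) - (1 + pv * pc) := by
        nlinarith [mul_nonneg (mul_nonneg hpv0.le hpc0.le) (sub_nonneg.2 hpv)]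
      exact mul_pos (mul_pos hpv0 hpc0) hin
    have hN : (0:ℝ) < 1 + pv * pc - pv := by nlinarith
    exact div_pos hN hK
  ext ⟨x1, x2⟩
  simp only [Set.mem_setOf_eq, Set.mem_union, Set.mem_singleton_iff, Prod.mk.injEq,
    Set.mem_Icc]
  constructor
  · rintro ⟨⟨hx10, hx11⟩, ⟨hx20, hx21⟩, h1, h2⟩
    rcases lt_or_eq_of_le hx11 with hlt | heq
    · -- x1 < 1 : then x2 = 0 and x1 = 0
      left
      have h20 := h2 0 ⟨le_refl _, zero_le_one⟩
      simp only [u2] at h20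
      have hx2 : x2 = 0 := by
        have hq : (0:ℝ) < (1 - x1) * ((pv * pc / (1 + pv * pc)) * (d / pv - d * pc / (1 + pv * pc))) :=
          mul_pos (by linarith) hc2
        nlinarith [h20]
      subst hx2
      have h10 := h1 0 ⟨le_refl _, zero_le_one⟩
      simp only [u1] at h10
      have hx1 : x1 = 0 := by nlinarith [h10]
      exact ⟨hx1, rfl⟩
    · -- x1 = 1
      right
      subst heq
      refine ⟨rfl, ?_, hx21⟩
      have h10 := h1 0 ⟨le_refl _, zero_le_one⟩
      simp only [u1] at h10
      rw [← NashAux.f1_nonpos_iff pv pc d hpv hpc hd x2]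
      nlinarith [h10]
  · rintro (⟨hx1, hx2⟩ | ⟨hx1, hg2x, hx21⟩)
    · -- (0,0)
      subst hx1; subst hx2
      refine ⟨⟨le_rfl, zero_le_one⟩, ⟨le_rfl, zero_le_one⟩, ?_, ?_⟩
      · rintro y ⟨hy0, hy1⟩
        simp only [u1]
        nlinarith [mul_nonneg hy0 hc1.le]
      · rintro y ⟨hy0, hy1⟩
        simp only [u2]
        nlinarith [mul_nonneg hy0 hc2.le]
    · -- (1, x2)
      have hx1' : x1 = 1 := hx1
      subst hx1'
      have hf1 : x2 * (d / pv - d) +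
          (1 - x2) * (1 / (1 + pv * pc)) * (d / pv - d / (1 + pv * pc)) ≤ 0 :=
        (NashAux.f1_nonpos_iff pv pc d hpv hpc hd x2).2 hg2x
      refine ⟨⟨zero_le_one, le_rfl⟩, ⟨by linarith, hx21⟩, ?_, ?_⟩
      · rintro y ⟨hy0, hy1⟩
        simp only [u1]
        have h0 : (1:ℝ) - 1 = 0 := by norm_num
        rw [h0, zero_mul, ge_iff_le]
        exact mul_nonpos_of_nonneg_of_nonpos (by linarith) hf1
      · rintro y ⟨hy0, hy1⟩
        have e : ∀ t : ℝ, u2 pv pc d (d / pv) 1 t = 0 := by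
          intro t; simp [u2]
        rw [e, e]
end

section
/- Let p_v ≥ 1, p_c ≥ 1, d > 0, R ≥ 0 be real numbers with R/d > 1/p_v. Then the set of Nash equilibria of the two-miner mining game is exactly {(0,0)}, i.e., the unique equilibrium is that both miners participate in mining with probability 1. -/
private lemma convex_pos {a c x : ℝ} (ha : 0 < a) (hc : 0 < c)
    (hx0 : 0 ≤ x) (hx1 : x ≤ 1) : 0 < x * a + (1 - x) * c := by
  nlinarith [mul_pos ha hc, mul_nonneg hx0 (sq_nonneg a),
    mul_nonneg (sub_nonneg.mpr hx1) (sq_nonneg c)]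

/-- If `R/d > 1/pv` (with `pv ≥ 1`, `pc ≥ 1`), the unique Nash equilibrium
is that both miners participate. -/
theorem nash_eq_case_high_reward
    (pv pc d R : ℝ) (hpv : 1 ≤ pv) (hpc : 1 ≤ pc) (hd : 0 < d) (hR : 0 ≤ R)
    (h : 1 / pv < R / d) :
    {p : ℝ × ℝ | IsNashEq pv pc d R p} = {(0, 0)} := by
  have hpv0 : 0 < pv := lt_of_lt_of_le one_pos hpv
  have hpc0 : 0 < pc := lt_of_lt_of_le one_pos hpc
  have hQ : 0 < 1 + pv * pc := by nlinarith
  have hdRpv : d < R * pv := by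
    have := (div_lt_div_iff₀ hpv0 hd).mp h
    linarith
  have h1 : 0 < R - d / pv := by
    rw [sub_pos, div_lt_iff₀ hpv0]; exact hdRpv
  have h3 : 0 < R - d / (1 + pv * pc) := by
    rw [sub_pos, div_lt_iff₀ hQ]
    nlinarith [mul_nonneg hR (mul_nonneg hpv0.le (sub_nonneg.mpr hpc))]
  have h2 : 0 < R - d * pc / (1 + pv * pc) := by
    rw [sub_pos, div_lt_iff₀ hQ]
    nlinarith [mul_lt_mul_of_pos_right hdRpv hpc0]
  have hA0 : 0 < 1 / (1 + pv * pc) * (R - d / (1 + pv * pc)) :=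
    mul_pos (by positivity) h3
  have hC : 0 < pv * pc / (1 + pv * pc) * (R - d * pc / (1 + pv * pc)) :=
    mul_pos (by positivity) h2
  ext ⟨x1, x2⟩
  simp only [Set.mem_setOf_eq, Set.mem_singleton_iff, Prod.mk.injEq]
  constructor
  · rintro ⟨hx1, hx2, H1, H2⟩
    simp only [Set.mem_Icc] at hx1 hx2
    have hB : 0 < x1 * (R - d / pv) +
        (1 - x1) * (pv * pc / (1 + pv * pc) * (R - d * pc / (1 + pv * pc))) :=
      convex_pos h1 hC hx1.1 hx1.2
    have h20 := H2 0 ⟨le_refl 0, zero_le_one⟩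
    simp only [u2] at h20
    have hx2z : x2 = 0 := by
      have hle : x2 ≤ 0 := by nlinarith [h20, hB]
      linarith [hx2.1]
    subst hx2z
    have h10 := H1 0 ⟨le_refl 0, zero_le_one⟩
    simp only [u1] at h10
    have hx1z : x1 = 0 := by
      have hle : x1 ≤ 0 := by nlinarith [h10, hA0]
      linarith [hx1.1]
    exact ⟨hx1z, rfl⟩
  · rintro ⟨rfl, rfl⟩
    refine ⟨⟨le_refl 0, zero_le_one⟩, ⟨le_refl 0, zero_le_one⟩, ?_, ?_⟩
    · intro y hy
      simp only [Set.mem_Icc] at hy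
      simp only [u1]
      nlinarith [mul_nonneg hy.1 hA0.le]
    · intro y hy
      simp only [Set.mem_Icc] at hy
      simp only [u2]
      nlinarith [mul_nonneg hy.1 hC.le]
end

section
/- Let p_v ≥ 1, d > 0, R ≥ 0 be real numbers and let p_c satisfy 1 − 1/p_v ≤ p_c < 1. If R/d < 1/(1+p_v·p_c), then the set of Nash equilibria of the two-miner mining game is exactly {(1,1)}, i.e., the unique equilibrium is that both miners do not participate in mining with probability 1. -/
/-- For `1 - 1/pv ≤ pc < 1`: if `R/d < 1/(1 + pv pc)`, the unique Nash
equilibrium is that both miners do not participate. -/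
theorem nash_eq_case2_low_reward
    (pv pc d R : ℝ) (hpv : 1 ≤ pv) (hpc1 : 1 - 1 / pv ≤ pc) (hpc2 : pc < 1)
    (hd : 0 < d) (hR : 0 ≤ R) (h : R / d < 1 / (1 + pv * pc)) :
    {p : ℝ × ℝ | IsNashEq pv pc d R p} = {(1, 1)} := by
  have hpv0 : (0:ℝ) < pv := lt_of_lt_of_le one_pos hpv
  have hpc0 : 0 ≤ pc := by
    have : (1:ℝ) - 1/pv ≥ 0 := by
      have : 1/pv ≤ 1 := by
        rw [div_le_one hpv0]; exact hpv
      linarith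
    linarith
  have hpvpc : pv - 1 ≤ pv * pc := by
    have := mul_le_mul_of_nonneg_left hpc1 (le_of_lt hpv0)
    have hne : pv ≠ 0 := ne_of_gt hpv0
    field_simp at this
    nlinarith [this]
  have hc : (0:ℝ) < 1 + pv * pc := by nlinarith
  have hcpv : pv ≤ 1 + pv * pc := by linarith
  have hc1 : (1:ℝ) ≤ 1 + pv * pc := by linarith
  -- key: R * (1 + pv*pc) < d
  have hkey : R * (1 + pv * pc) < d := by
    rw [div_lt_div_iff₀ hd hc] at h
    linarith
  have hRc : R < d / (1 + pv * pc) := (lt_div_iff₀ hc).2 hkey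
  have hRd : R < d := by nlinarith
  have hRpv : R < d / pv := by
    rw [lt_div_iff₀ hpv0]
    nlinarith
  ext p
  simp only [Set.mem_setOf_eq, Set.mem_singleton_iff, IsNashEq, Prod.ext_iff]
  constructor
  · rintro ⟨⟨h10, h11⟩, ⟨h20, h21⟩, hb1, hb2⟩
    -- A(p.2) < 0
    have hA : p.2 * (R - d) + (1 - p.2) * (1 / (1 + pv * pc)) * (R - d / (1 + pv * pc)) < 0 := by
      have t1 : R - d < 0 := by linarith
      have t2 : R - d / (1 + pv * pc) < 0 := by linarith
      have hcinv : 0 < 1 / (1 + pv * pc) := by positivity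
      have s2 : (1 - p.2) * (1 / (1 + pv * pc)) * (R - d / (1 + pv * pc)) ≤ 0 :=
        mul_nonpos_of_nonneg_of_nonpos (mul_nonneg (by linarith) hcinv.le) t2.le
      rcases lt_or_eq_of_le h20 with h20' | h20'
      · have s1 : p.2 * (R - d) < 0 := mul_neg_of_pos_of_neg h20' t1
        linarith
      · have s1 : (1 - p.2) * (1 / (1 + pv * pc)) * (R - d / (1 + pv * pc)) < 0 := by
          rw [← h20']
          have := mul_neg_of_pos_of_neg hcinv t2
          nlinarith
        nlinarith
    have hb1' := hb1 1 ⟨zero_le_one, le_refl 1⟩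
    simp only [u1, sub_self, zero_mul] at hb1'
    have hp1 : p.1 = 1 := by
      by_contra hne
      have hlt : p.1 < 1 := lt_of_le_of_ne h11 hne
      have : (1 - p.1) * (p.2 * (R - d) +
          (1 - p.2) * (1 / (1 + pv * pc)) * (R - d / (1 + pv * pc))) < 0 :=
        mul_neg_of_pos_of_neg (by linarith) hA
      linarith
    refine ⟨hp1, ?_⟩
    have hb2' := hb2 1 ⟨zero_le_one, le_refl 1⟩
    simp only [u2, hp1, sub_self, zero_mul, mul_zero, add_zero, one_mul] at hb2'
    have ht : R - d / pv < 0 := by linarith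
    by_contra hne
    have hlt : p.2 < 1 := lt_of_le_of_ne h21 hne
    have : (1 - p.2) * (R - d / pv) < 0 := mul_neg_of_pos_of_neg (by linarith) ht
    linarith
  · rintro ⟨h1, h2⟩
    refine ⟨?_, ?_, ?_, ?_⟩
    · rw [h1]; exact ⟨zero_le_one, le_refl 1⟩
    · rw [h2]; exact ⟨zero_le_one, le_refl 1⟩
    · intro y ⟨hy0, hy1⟩
      simp only [u1, h1, h2]
      nlinarith
    · intro y ⟨hy0, hy1⟩
      simp only [u2, h1, h2]
      have ht : R - d / pv < 0 := by linarith
      nlinarith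
end

section
/- Let p_v ≥ 1, d > 0, R ≥ 0 be real numbers and let p_c satisfy 0 < p_c < 1 − 1/p_v. If R/d < 1/p_v, then the set of Nash equilibria of the two-miner mining game is exactly {(1,1)}, i.e., the unique equilibrium is that both miners do not participate in mining with probability 1. -/
/-- For `0 < pc < 1 - 1/pv`: if `R/d < 1/pv`, the unique Nash equilibrium is
that both miners do not participate. -/
theorem nash_eq_case3_low_reward
    (pv pc d R : ℝ) (hpv : 1 ≤ pv) (hpc1 : 0 < pc) (hpc2 : pc < 1 - 1 / pv)
    (hd : 0 < d) (hR : 0 ≤ R) (h : R / d < 1 / pv) :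
    {p : ℝ × ℝ | IsNashEq pv pc d R p} = {(1, 1)} := by
  have hpv0 : (0:ℝ) < pv := lt_of_lt_of_le one_pos hpv
  have hA0 : (0:ℝ) < 1 + pv * pc := by nlinarith
  have hApv : 1 + pv * pc < pv := by
    have h1 : pv * (1 / pv) = 1 := mul_one_div_cancel (ne_of_gt hpv0)
    nlinarith [mul_lt_mul_of_pos_left hpc2 hpv0]
  have hRpv : R < d / pv := by
    rw [lt_div_iff₀ hpv0]
    have := (div_lt_div_iff₀ hd hpv0).mp h
    linarith
  have hRA : R < d / (1 + pv * pc) := lt_trans hRpv (div_lt_div_of_pos_left hd hA0 hApv)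
  have hRd : R < d := lt_of_lt_of_le hRpv (div_le_self hd.le hpv)
  have hdpv0 : 0 < d / pv := div_pos hd hpv0
  ext ⟨x1, x2⟩
  simp only [Set.mem_setOf_eq, Set.mem_singleton_iff, Prod.mk.injEq]
  constructor
  · rintro ⟨⟨hx1a, hx1b⟩, ⟨hx2a, hx2b⟩, H1, H2⟩
    have hB1 : x2 * (R - d) +
        (1 - x2) * (1 / (1 + pv * pc)) * (R - d / (1 + pv * pc)) < 0 := by
      rcases eq_or_lt_of_le hx2b with h' | h'
      · rw [← h']; nlinarith
      · have hc : 0 < 1 / (1 + pv * pc) := by positivity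
        have t1 : x2 * (R - d) ≤ 0 :=
          mul_nonpos_of_nonneg_of_nonpos hx2a (by linarith)
        have t2 : (1 - x2) * (1 / (1 + pv * pc)) * (R - d / (1 + pv * pc)) < 0 := by
          apply mul_neg_of_pos_of_neg
          · exact mul_pos (by linarith) hc
          · linarith
        linarith
    have key1 := H1 1 ⟨zero_le_one, le_refl 1⟩
    have h10 : u1 pv pc d R 1 x2 = 0 := by simp [u1]
    rw [h10] at key1
    unfold u1 at key1
    have hx1 : x1 = 1 := by
      refine le_antisymm hx1b ?_
      nlinarith
    subst hx1
    have key2 := H2 1 ⟨zero_le_one, le_refl 1⟩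
    have h20 : u2 pv pc d R 1 1 = 0 := by simp [u2]
    rw [h20] at key2
    unfold u2 at key2
    have hx2 : x2 = 1 := by
      refine le_antisymm hx2b ?_
      nlinarith
    exact ⟨rfl, hx2⟩
  · rintro ⟨h1, h2⟩
    subst h1; subst h2
    refine ⟨⟨zero_le_one, le_refl 1⟩, ⟨zero_le_one, le_refl 1⟩, ?_, ?_⟩
    · intro y hy
      have : u1 pv pc d R 1 1 = 0 := by simp [u1]
      rw [this]
      unfold u1
      nlinarith [hy.1, hy.2]
    · intro y hy
      have : u2 pv pc d R 1 1 = 0 := by simp [u2]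
      rw [this]
      unfold u2
      nlinarith [hy.1, hy.2]
end

section
/- Let p_v ≥ 1, d > 0, R ≥ 0 be real numbers and let p_c satisfy 0 < p_c < 1 − 1/p_v. If 1/p_v < R/d < 1/(1+p_v·p_c), then the set of Nash equilibria of the two-miner mining game is exactly {(1, 0)}, i.e., the unique equilibrium is that miner 1 does not participate with probability 1 while miner 2 participates with probability 1; and if instead R/d > 1/(1+p_v·p_c), then the set of Nash equilibria is exactly {(0,0)}, i.e., both miners participate with probability 1. -/
/-- If miner 2's mining payoff coefficient is positive, any best response has `x2 = 0`. -/
lemma x2_forced (pv pc d R x1 x2 : ℝ)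
    (hx1 : x1 ∈ Set.Icc (0 : ℝ) 1) (hx2 : x2 ∈ Set.Icc (0 : ℝ) 1)
    (ha : 0 < R - d / pv) (hb : 0 < R - d * pc / (1 + pv * pc))
    (hc : 0 < pv * pc / (1 + pv * pc))
    (h : u2 pv pc d R x1 x2 ≥ u2 pv pc d R x1 0) : x2 = 0 := by
  simp only [u2] at h
  have hcb := mul_pos hc hb
  have hG : 0 < x1 * (R - d / pv) +
      (1 - x1) * (pv * pc / (1 + pv * pc)) * (R - d * pc / (1 + pv * pc)) := by
    rcases eq_or_lt_of_le hx1.1 with h0 | h0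
    · subst h0; norm_num; linarith [hcb]
    · nlinarith [mul_pos h0 ha, mul_nonneg (sub_nonneg.2 hx1.2) hcb.le]
  have hle : x2 ≤ 0 := by nlinarith [hG]
  linarith [hx2.1]

/-- For `0 < pc < 1 - 1/pv`: if `1/pv < R/d < 1/(1 + pv pc)`, the unique Nash
equilibrium is `(1, 0)` (miner 1 does not participate, miner 2 participates);
if `R/d > 1/(1 + pv pc)`, the unique Nash equilibrium is `(0, 0)` (both
participate). -/
theorem nash_eq_case3_higher_rewards
    (pv pc d R : ℝ) (hpv : 1 ≤ pv) (hpc1 : 0 < pc) (hpc2 : pc < 1 - 1 / pv)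
    (hd : 0 < d) (hR : 0 ≤ R) :
    (1 / pv < R / d → R / d < 1 / (1 + pv * pc) →
      {p : ℝ × ℝ | IsNashEq pv pc d R p} = {(1, 0)}) ∧
    (1 / (1 + pv * pc) < R / d →
      {p : ℝ × ℝ | IsNashEq pv pc d R p} = {(0, 0)}) := by
  have hpv0 : (0 : ℝ) < pv := by linarith
  have hipv : 0 < 1 / pv := by positivity
  have hs : (0 : ℝ) < 1 + pv * pc := by nlinarith
  have hsp : 1 + pv * pc < pv := by
    have h1 : pv * (1 / pv) = 1 := mul_one_div_cancel (ne_of_gt hpv0)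
    nlinarith
  have hpclt1 : pc < 1 := by linarith
  have hc : 0 < pv * pc / (1 + pv * pc) := by positivity
  constructor
  · intro h1 h2
    have hRd1 : d < R * pv := by
      rw [div_lt_div_iff₀ hpv0 hd] at h1; linarith
    have hRd2 : R * (1 + pv * pc) < d := by
      rw [div_lt_div_iff₀ hd hs] at h2; linarith
    have ha : 0 < R - d / pv := by
      rw [sub_pos, div_lt_iff₀ hpv0]; linarith
    have hb : 0 < R - d * pc / (1 + pv * pc) := by
      rw [sub_pos, div_lt_iff₀ hs]; nlinarith
    have hT : 1 / (1 + pv * pc) * (R - d / (1 + pv * pc)) < 0 := by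
      apply mul_neg_of_pos_of_neg (by positivity)
      rw [sub_neg, lt_div_iff₀ hs]; linarith
    ext ⟨x1, x2⟩
    simp only [Set.mem_setOf_eq, Set.mem_singleton_iff, Prod.mk.injEq]
    constructor
    · rintro ⟨hx1, hx2, h1e, h2e⟩
      have hx20 : x2 = 0 :=
        x2_forced pv pc d R x1 x2 hx1 hx2 ha hb hc
          (h2e 0 ⟨le_refl 0, zero_le_one⟩)
      subst hx20
      have key := h1e 1 ⟨zero_le_one, le_refl 1⟩
      simp only [u1] at key
      have hx11 : x1 = 1 := by nlinarith [hx1.2, hT]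
      exact ⟨hx11, rfl⟩
    · rintro ⟨rfl, rfl⟩
      refine ⟨⟨zero_le_one, le_refl 1⟩, ⟨le_refl 0, zero_le_one⟩, ?_, ?_⟩
      · intro y hy
        simp only [u1]
        nlinarith [hy.1, hy.2, hT]
      · intro y hy
        simp only [u2]
        nlinarith [hy.1, hy.2, ha]
  · intro h2
    have hRd2 : d < R * (1 + pv * pc) := by
      rw [div_lt_div_iff₀ hs hd] at h2; linarith
    have hR0 : 0 < R := by nlinarith
    have ha : 0 < R - d / pv := by
      rw [sub_pos, div_lt_iff₀ hpv0]; nlinarith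
    have hb : 0 < R - d * pc / (1 + pv * pc) := by
      rw [sub_pos, div_lt_iff₀ hs]; nlinarith
    have hT : 0 < 1 / (1 + pv * pc) * (R - d / (1 + pv * pc)) := by
      apply mul_pos (by positivity)
      rw [sub_pos, div_lt_iff₀ hs]; linarith
    ext ⟨x1, x2⟩
    simp only [Set.mem_setOf_eq, Set.mem_singleton_iff, Prod.mk.injEq]
    constructor
    · rintro ⟨hx1, hx2, h1e, h2e⟩
      have hx20 : x2 = 0 :=
        x2_forced pv pc d R x1 x2 hx1 hx2 ha hb hc
          (h2e 0 ⟨le_refl 0, zero_le_one⟩)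
      subst hx20
      have key := h1e 0 ⟨le_refl 0, zero_le_one⟩
      simp only [u1] at key
      have hx10 : x1 = 0 := by nlinarith [hx1.1, hT]
      exact ⟨hx10, rfl⟩
    · rintro ⟨rfl, rfl⟩
      refine ⟨⟨le_refl 0, zero_le_one⟩, ⟨le_refl 0, zero_le_one⟩, ?_, ?_⟩
      · intro y hy
        simp only [u1]
        linarith [mul_nonneg hy.1 hT.le]
      · intro y hy
        simp only [u2]
        linarith [mul_nonneg hy.1 (mul_pos hc hb).le]
end

section
/- Let n ≥ 2 be a natural number and let d > 0, R ≥ 0 be real numbers. In the symmetric n-miner mining game, the all-participate profile s = (1, …, 1) is a pure-strategy Nash equilibrium (i.e., for every miner k, U_k(1, …, 1) is at least the payoff U_k obtains by unilaterally switching to s_k = 0, which equals 0) if and only if R ≥ d/n. In particular, the threshold reward-to-difficulty ratio at which the all-participate equilibrium appears is 1/n, inversely proportional to the number of miners. -/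
open Finset

/-- Utility of miner `k` in the symmetric `n`-miner mining game: `s i = true`
means miner `i` participates in mining. -/
noncomputable def U (n : ℕ) (d R : ℝ) (s : Fin n → Bool) (k : Fin n) : ℝ :=
  if (∑ i, (if s i then (1 : ℝ) else 0)) = 0 then 0
  else ((if s k then (1 : ℝ) else 0) / ∑ i, (if s i then (1 : ℝ) else 0)) *
    (R - d / ∑ i, (if s i then (1 : ℝ) else 0))

/-- In the symmetric `n`-miner game (`n ≥ 2`), the all-participate profile is
a pure Nash equilibrium — i.e., no miner gains by unilaterally switching to
non-participation — if and only if `R ≥ d / n`.  Moreover, the payoff of a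
unilateral deviator is `0`.  Hence the all-participate equilibrium appears at
the threshold `R / d = 1 / n`, inversely proportional to the number of
miners. -/
theorem all_participate_nash_iff
    (n : ℕ) (hn : 2 ≤ n) (d R : ℝ) (hd : 0 < d) (hR : 0 ≤ R) :
    (∀ k : Fin n,
        U n d R (Function.update (fun _ => true) k false) k = 0) ∧
    ((∀ k : Fin n,
        U n d R (fun _ => true) k ≥
          U n d R (Function.update (fun _ => true) k false) k)
      ↔ R ≥ d / n) := by
  have hn0 : 0 < n := by omega
  have hdev : ∀ k : Fin n,
      U n d R (Function.update (fun _ => true) k false) k = 0 := by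
    intro k
    have hk : Function.update (fun _ : Fin n => true) k false k = false := by
      simp [Function.update]
    unfold U
    rw [hk]
    by_cases h : (∑ i, (if Function.update (fun _ : Fin n => true) k false i then (1:ℝ) else 0)) = 0 <;> simp [h]
  have hsum : (∑ i : Fin n, (if (fun _ : Fin n => true) i then (1:ℝ) else 0)) = n := by
    simp
  have hU1 : ∀ k : Fin n, U n d R (fun _ => true) k = (1 / n) * (R - d / n) := by
    intro k
    unfold U
    rw [hsum]
    have : (n : ℝ) ≠ 0 := Nat.cast_ne_zero.mpr hn0.ne'
    simp [this]
  refine ⟨hdev, ?_⟩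
  have hnpos : (0:ℝ) < n := Nat.cast_pos.mpr hn0
  constructor
  · intro h
    have hk : Fin n := ⟨0, hn0⟩
    have := h hk
    rw [hU1 hk, hdev hk] at this
    have h2 : (0:ℝ) ≤ R - d / n := by
      by_contra hc
      push_neg at hc
      nlinarith [mul_pos (one_div_pos.mpr hnpos) (neg_pos.mpr hc)]
    linarith
  · intro h k
    rw [hU1 k, hdev k]
    have : (0:ℝ) ≤ R - d / n := by linarith
    positivity
end
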